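/- Binding a list of values succeeds: if state s is well-formed with respect to Γ and Σ, the variables x₁,…,xₙ are bound in the environment Ω to locations with types τ₁,…,τₙ that are valid Freeable addresses, and values v₁,…,vₙ with typeof(vᵢ) = τᵢ are given (same length as the variable list), then the memory can be sequentially updated to store each vᵢ at the location of xᵢ, and the final state remains well-formed. -/
import Mathlib


/-- Types. -/
inductive Ty : Type
  | int | bool | unit
  | ptr : Ty → Ty
deriving DecidableEq

/-- Values. -/
inductive Val : Type
  | intV : Int → Val
  | boolV : Bool → Val
  | unitV : Val
  | locV : Nat → Val
deriving DecidableEq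

/-- Access permissions (CompCert-style), ordered with `Freeable` maximal. -/
inductive Perm : Type
  | nonempty | readable | writable | freeable
deriving DecidableEq

def Perm.toNat : Perm → Nat
  | .nonempty => 0
  | .readable => 1
  | .writable => 2
  | .freeable => 3

/-- Permission order. -/
def Perm.le (p q : Perm) : Prop := p.toNat ≤ q.toNat

/-- CompCert-style memory: contents, permissions, and a fresh-block counter. -/
structure Mem where
  contents : Nat → Option Val
  perm : Nat → Option Perm
  next : Nat

/-- `isValidAccess Θ l p`: `l` is an allocated address of `Θ` whose permission
is at least `p`. -/
def isValidAccess (Θ : Mem) (l : Nat) (p : Perm) : Prop :=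
  ∃ q, Θ.perm l = some q ∧ Perm.le p q

/-- Value typing relative to a store typing `Σ` (a location `l` has type
`τ*` when `Σ l = some τ`). -/
def ValHasTy (St : Nat → Option Ty) : Val → Ty → Prop
  | .intV _, .int => True
  | .boolV _, .bool => True
  | .unitV, .unit => True
  | .locV l, .ptr τ => St l = some τ
  | _, _ => False

/-- Store the value `v` at location `l`. -/
def setMem (Θ : Mem) (l : Nat) (v : Val) : Mem :=
  { Θ with contents := fun l' => if l' = l then some v else Θ.contents l' }

/-- Allocate a fresh block (the bounds `lo`, `hi` delimit its size);
allocation is total and returns the fresh location. -/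
def alloc (Θ : Mem) (_lo _hi : Int) : Mem × Nat :=
  ({ contents := Θ.contents,
     perm := fun l => if l = Θ.next then some Perm.freeable else Θ.perm l,
     next := Θ.next + 1 }, Θ.next)

/-- Program states: globals Δ, variable environment Ω, memory Θ. -/
structure State where
  glob : String → Option Nat
  env : String → Option (Nat × Ty)
  mem : Mem

/-- Extend a store typing. -/
def updSt (St : Nat → Option Ty) (l : Nat) (τ : Ty) : Nat → Option Ty :=
  fun l' => if l' = l then some τ else St l'

/-- Extend a typing context. -/
def updTC (Γ : String → Option Ty) (x : String) (τ : Ty) : String → Option Ty :=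
  fun y => if y = x then some τ else Γ y

/-- Extend a variable environment. -/
def updEnv (Ω : String → Option (Nat × Ty)) (x : String) (l : Nat) (τ : Ty) :
    String → Option (Nat × Ty) :=
  fun y => if y = x then some (l, τ) else Ω y

/-- Store-typing invariant. -/
def StoreWF (St : Nat → Option Ty) (Θ : Mem) : Prop :=
  (∀ l τ, St l = some τ → ∃ v, Θ.contents l = some v ∧ ValHasTy St v τ) ∧
  (∀ l τ, St l = some τ → isValidAccess Θ l Perm.freeable)

/-- Well-formed states. -/
def WFState (Γ : String → Option Ty) (St : Nat → Option Ty) (s : State) : Prop :=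
  (∀ x τ, Γ x = some τ →
      ∃ l, (s.env x = some (l, τ) ∨ s.glob x = some l) ∧ St l = some τ) ∧
  StoreWF St s.mem

/-- Sequentially store a list of (location, value) pairs. -/
def storeList : Mem → List (Nat × Val) → Mem
  | Θ, [] => Θ
  | Θ, (l, v) :: rest => storeList (setMem Θ l v) rest


lemma setMem_StoreWF {St : Nat → Option Ty} {Θ : Mem} {l : Nat} {τ : Ty} {v : Val}
    (h : StoreWF St Θ) (hl : St l = some τ) (hv : ValHasTy St v τ) :
    StoreWF St (setMem Θ l v) := by
  obtain ⟨h1, h2⟩ := h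
  constructor
  · intro l' τ' hl'
    by_cases he : l' = l
    · subst he
      rw [hl] at hl'; injection hl' with hτ; subst hτ
      exact ⟨v, by simp [setMem], hv⟩
    · obtain ⟨w, hw1, hw2⟩ := h1 l' τ' hl'
      exact ⟨w, by simp [setMem, he, hw1], hw2⟩
  · intro l' τ' hl'
    exact h2 l' τ' hl'

lemma storeList_StoreWF (St : Nat → Option Ty) :
    ∀ (xs : List (String × Nat × Ty)) (vs : List Val) (Θ : Mem),
    StoreWF St Θ →
    (∀ p ∈ xs, St p.2.1 = some p.2.2) →
    (∀ q ∈ xs.zip vs, ValHasTy St q.2 q.1.2.2) →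
    StoreWF St (storeList Θ ((xs.map (fun p => p.2.1)).zip vs))
  | [], _, Θ, h, _, _ => h
  | _ :: _, [], Θ, h, _, _ => h
  | p :: xs, v :: vs, Θ, h, hb, ht => by
    simp only [List.map_cons, List.zip_cons_cons, storeList]
    exact storeList_StoreWF St xs vs _
      (setMem_StoreWF h (hb p (by simp)) (ht (p, v) (by simp)))
      (fun q hq => hb q (by simp [hq]))
      (fun q hq => ht q (by simp [hq]))

/-- binding a list of values succeeds.  If each variable `xᵢ`
is bound in the environment to a valid `Freeable` location `lᵢ` of store type
`τᵢ`, and each value `vᵢ` has type `τᵢ` (lists of equal length), then the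
sequential memory updates succeed and the final state remains well-formed. -/
theorem bind_values_succeeds
    (Γ : String → Option Ty) (St : Nat → Option Ty) (s : State)
    (xs : List (String × Nat × Ty)) (vs : List Val)
    (hwf : WFState Γ St s)
    (hlen : xs.length = vs.length)
    (hbind : ∀ p ∈ xs, s.env p.1 = some (p.2.1, p.2.2) ∧
        St p.2.1 = some p.2.2 ∧ isValidAccess s.mem p.2.1 Perm.freeable)
    (htyp : ∀ q ∈ xs.zip vs, ValHasTy St q.2 q.1.2.2) :
    WFState Γ St
      { s with mem := storeList s.mem ((xs.map (fun p => p.2.1)).zip vs) } := by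
  obtain ⟨he, hs⟩ := hwf
  exact ⟨he, storeList_StoreWF St xs vs s.mem hs
    (fun p hp => (hbind p hp).2.1) htyp⟩
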